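/- Weighted L¹ → L² kernel estimate for the heat semigroup on ℝ^d. Let d ≥ 1, let β be a multi-index on ℝ^d with |β| ≤ 1 and let s ∈ [0, |β|]. Then there exists C ≥ 0 such that for every t > 0 and every φ ∈ L¹(ℝ^d, ℂ): ‖ x ↦ ⟨x⟩^{−s} ∫_{ℝ^d} ∂^β_x K(t, x−y) ⟨y⟩^{−s} φ(y) dy ‖_{L²(ℝ^d)} ≤ C t^{−d/4 − |β|/2 − s/2} ‖φ‖_{L¹(ℝ^d)}. -/

import Mathlib

/-!
Peetre's inequality `|x - y| ≤ 2⟨x⟩⟨y⟩` trades the weights `⟨x⟩^{-s}⟨y⟩^{-s}` for `|x - y|^{-s}`,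
and the remaining factor `|x - y|^{|β| - s}` (with `0 ≤ |β| - s ≤ 1`) is absorbed by half of the
Gaussian at the price of `t^{(|β| - s)/2}`. The weighted kernel is thus dominated by the
convolution kernel `C t^{-d/2-|β|/2-s/2} exp(-|x-y|²/(8t))`, and Young's inequality
`‖g * f‖₂ ≤ ‖g‖₂ ‖f‖₁` (Cauchy–Schwarz in `y`, then Tonelli) with
`‖exp(-|·|²/(8t))‖₂ = (4πt)^{d/4}` gives the bound.
-/

open MeasureTheory
open scoped ENNReal

noncomputable section

abbrev Ed (d : ℕ) := EuclideanSpace ℝ (Fin d)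

/-- The Japanese bracket `⟨x⟩ = (1 + |x|²)^(1/2)`. -/
noncomputable def jap {d : ℕ} (x : Ed d) : ℝ := Real.sqrt (1 + ‖x‖ ^ 2)

noncomputable def heatKernel (d : ℕ) (t : ℝ) (x : Ed d) : ℝ :=
  (4 * Real.pi * t) ^ (-(d : ℝ) / 2) * Real.exp (-‖x‖ ^ 2 / (4 * t))

/-- For a multi-index `β` with `|β| ≤ 1`, the derivative `∂^β_x K(t,x)` of the heat kernel:
for `β = 0` it is `K(t,x)` itself, and for `β` the `j`-th coordinate direction it is
`-(xⱼ/(2t)) K(t,x)`. -/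
noncomputable def heatKernelDeriv (d : ℕ) (β : Fin d → ℕ) (t : ℝ) (x : Ed d) : ℝ :=
  (∏ j, (-(x j) / (2 * t)) ^ (β j)) * heatKernel d t x

open Real

namespace ENNReal

theorem sq_lintegral_mul_le {α : Type*} [MeasurableSpace α] {μ : Measure α} {f w : α → ℝ≥0∞}
    (hf : AEMeasurable f μ) (hw : AEMeasurable w μ) :
    (∫⁻ a, f a * w a ∂μ) ^ 2 ≤ (∫⁻ a, f a ^ 2 * w a ∂μ) * ∫⁻ a, w a ∂μ := by
  have hsplit : ∀ a, f a * w a = (f a ^ 2 * w a) ^ (1 / 2 : ℝ) * w a ^ (1 / 2 : ℝ) := fun a => by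
    rw [← ENNReal.mul_rpow_of_nonneg _ _ (by norm_num), mul_assoc, ← sq, ← mul_pow,
      ← ENNReal.rpow_natCast, ← ENNReal.rpow_mul]
    norm_num
  have hCS : ∫⁻ a, f a * w a ∂μ ≤
      (∫⁻ a, f a ^ 2 * w a ∂μ) ^ (1 / 2 : ℝ) * (∫⁻ a, w a ∂μ) ^ (1 / 2 : ℝ) :=
    (lintegral_congr hsplit).trans_le <| ENNReal.lintegral_mul_norm_pow_le
      (hf.pow_const 2 |>.mul hw) hw (by norm_num) (by norm_num) (by norm_num)
  calc (∫⁻ a, f a * w a ∂μ) ^ 2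
      ≤ ((∫⁻ a, f a ^ 2 * w a ∂μ) ^ (1 / 2 : ℝ) * (∫⁻ a, w a ∂μ) ^ (1 / 2 : ℝ)) ^ 2 := by
        gcongr
    _ = (∫⁻ a, f a ^ 2 * w a ∂μ) * ∫⁻ a, w a ∂μ := by
      rw [← ENNReal.mul_rpow_of_nonneg _ _ (by norm_num), ← ENNReal.rpow_natCast,
        ← ENNReal.rpow_mul]
      norm_num

end ENNReal

section Young

variable {G : Type*} [AddGroup G] [MeasurableSpace G] [MeasurableAdd₂ G] [MeasurableNeg G]
  {μ : Measure G} [SFinite μ] [μ.IsAddRightInvariant]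

theorem lintegral_sq_lintegral_sub_mul_le {g w : G → ℝ≥0∞} (hg : Measurable g)
    (hw : AEMeasurable w μ) :
    ∫⁻ x, (∫⁻ y, g (x - y) * w y ∂μ) ^ 2 ∂μ ≤ (∫⁻ z, g z ^ 2 ∂μ) * (∫⁻ y, w y ∂μ) ^ 2 := by
  have hF : AEMeasurable (Function.uncurry fun x y => g (x - y) ^ 2 * w y) (μ.prod μ) :=
    ((hg.comp measurable_sub).pow_const 2).aemeasurable.mul
      (hw.comp_quasiMeasurePreserving Measure.quasiMeasurePreserving_snd)
  -- `w` is only a.e. measurable, but replacing it by a measurable version leaves every inner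
  -- integral unchanged
  have hFx : AEMeasurable (fun x => ∫⁻ y, g (x - y) ^ 2 * w y ∂μ) μ := by
    have hmk : (fun x => ∫⁻ y, g (x - y) ^ 2 * w y ∂μ) =
        fun x => ∫⁻ y, g (x - y) ^ 2 * hw.mk w y ∂μ :=
      funext fun x => lintegral_congr_ae (hw.ae_eq_mk.mono fun y hy => by simp only [hy])
    rw [hmk]
    exact (((hg.comp measurable_sub).pow_const 2).mul
      (hw.measurable_mk.comp measurable_snd)).lintegral_prod_right'.aemeasurable
  calc ∫⁻ x, (∫⁻ y, g (x - y) * w y ∂μ) ^ 2 ∂μ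
      ≤ ∫⁻ x, (∫⁻ y, g (x - y) ^ 2 * w y ∂μ) * ∫⁻ y, w y ∂μ ∂μ :=
        lintegral_mono fun x => ENNReal.sq_lintegral_mul_le
          ((hg.comp (measurable_const.sub measurable_id)).aemeasurable) hw
    _ = (∫⁻ x, ∫⁻ y, g (x - y) ^ 2 * w y ∂μ ∂μ) * ∫⁻ y, w y ∂μ := lintegral_mul_const'' _ hFx
    _ = (∫⁻ y, (∫⁻ z, g z ^ 2 ∂μ) * w y ∂μ) * ∫⁻ y, w y ∂μ := by
        rw [lintegral_lintegral_swap hF]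
        congr 1
        refine lintegral_congr fun y => ?_
        have hgy : AEMeasurable (fun x => g (x - y) ^ 2) μ :=
          ((hg.pow_const 2).comp (measurable_sub_const y)).aemeasurable
        rw [lintegral_mul_const'' _ hgy, lintegral_sub_right_eq_self (fun z => g z ^ 2) y]
    _ = (∫⁻ z, g z ^ 2 ∂μ) * (∫⁻ y, w y ∂μ) ^ 2 := by
        rw [lintegral_const_mul'' _ hw, sq, mul_assoc]

theorem eLpNorm_two_lintegral_sub_mul_le {g w : G → ℝ≥0∞} (hg : Measurable g)
    (hw : AEMeasurable w μ) :
    eLpNorm (fun x => ∫⁻ y, g (x - y) * w y ∂μ) 2 μ ≤ eLpNorm g 2 μ * ∫⁻ y, w y ∂μ := by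
  have hsq : ∀ f : G → ℝ≥0∞, eLpNorm f 2 μ ^ 2 = ∫⁻ x, f x ^ 2 ∂μ := fun f => by
    simpa using eLpNorm_nnreal_pow_eq_lintegral (f := f) (μ := μ) (p := 2) two_ne_zero
  rw [← ENNReal.pow_le_pow_left_iff two_ne_zero, mul_pow, hsq, hsq]
  exact lintegral_sq_lintegral_sub_mul_le hg hw

theorem eLpNorm_two_integral_kernel_smul_le {E : Type*} [NormedAddCommGroup E] [NormedSpace ℝ E]
    {k : G → G → ℝ} {g : G → ℝ} (hg : Measurable g) (hk : ∀ x y, |k x y| ≤ g (x - y))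
    {φ : G → E} (hφ : AEStronglyMeasurable φ μ) :
    eLpNorm (fun x => ∫ y, k x y • φ y ∂μ) 2 μ ≤ eLpNorm g 2 μ * eLpNorm φ 1 μ := by
  rw [← eLpNorm_enorm g, eLpNorm_one_eq_lintegral_enorm]
  refine le_trans (eLpNorm_mono_enorm fun x => ?_)
    (eLpNorm_two_lintegral_sub_mul_le hg.enorm hφ.enorm)
  calc ‖∫ y, k x y • φ y ∂μ‖ₑ ≤ ∫⁻ y, ‖k x y • φ y‖ₑ ∂μ := enorm_integral_le_lintegral_enorm _
    _ ≤ ∫⁻ y, ‖g (x - y)‖ₑ * ‖φ y‖ₑ ∂μ := lintegral_mono fun y => by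
        rw [enorm_smul, Real.enorm_eq_ofReal_abs, Real.enorm_eq_ofReal_abs]
        gcongr ?_ * _
        exact ENNReal.ofReal_le_ofReal ((hk x y).trans (le_abs_self _))
    _ = _ := (enorm_eq_self _).symm

end Young

theorem eLpNorm_two_exp_neg_mul_sq_norm {V : Type*} [NormedAddCommGroup V] [InnerProductSpace ℝ V]
    [FiniteDimensional ℝ V] [MeasurableSpace V] [BorelSpace V] {b : ℝ} (hb : 0 < b) :
    eLpNorm (fun v : V => exp (-b * ‖v‖ ^ 2)) 2 volume =
      ENNReal.ofReal ((π / (2 * b)) ^ (Module.finrank ℝ V / 4 : ℝ)) := by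
  have hint : ∫ v : V, exp (-(2 * b) * ‖v‖ ^ 2) = (π / (2 * b)) ^ (Module.finrank ℝ V / 2 : ℝ) :=
    GaussianFourier.integral_rexp_neg_mul_sq_norm (by positivity)
  have hsq : ∫⁻ v : V, ‖exp (-b * ‖v‖ ^ 2)‖ₑ ^ (2 : ℝ) =
      ENNReal.ofReal ((π / (2 * b)) ^ (Module.finrank ℝ V / 2 : ℝ)) := by
    rw [← hint, ofReal_integral_eq_lintegral_ofReal
      (Integrable.of_integral_ne_zero (by rw [hint]; positivity))
      (Filter.Eventually.of_forall fun v => (exp_pos _).le)]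
    refine lintegral_congr fun v => ?_
    rw [Real.enorm_eq_ofReal (exp_pos _).le, ENNReal.ofReal_rpow_of_nonneg (exp_pos _).le
      (by norm_num), ← exp_mul]
    ring_nf
  rw [eLpNorm_eq_lintegral_rpow_enorm_toReal two_ne_zero ENNReal.ofNat_ne_top, ENNReal.toReal_ofNat,
    hsq, ENNReal.ofReal_rpow_of_nonneg (by positivity) (by norm_num), ← rpow_mul (by positivity)]
  ring_nf

theorem one_le_jap {d : ℕ} (x : Ed d) : 1 ≤ jap x :=
  one_le_sqrt.mpr (le_add_of_nonneg_right (sq_nonneg _))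

theorem jap_pos {d : ℕ} (x : Ed d) : 0 < jap x := zero_lt_one.trans_le (one_le_jap x)

theorem norm_le_jap {d : ℕ} (x : Ed d) : ‖x‖ ≤ jap x :=
  le_sqrt_of_sq_le (le_add_of_nonneg_left zero_le_one)

theorem norm_sub_le_two_mul_jap_mul_jap {d : ℕ} (x y : Ed d) : ‖x - y‖ ≤ 2 * (jap x * jap y) := by
  have hx := one_le_jap x
  have hy := one_le_jap y
  nlinarith [norm_sub_le x y, norm_le_jap x, norm_le_jap y]

theorem jap_mul_jap_rpow_neg_mul_norm_sub_rpow_le {d : ℕ} (x y : Ed d) {s a : ℝ} (hs : 0 ≤ s)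
    (hsa : s ≤ a) :
    (jap x * jap y) ^ (-s) * ‖x - y‖ ^ a ≤ 2 ^ s * ‖x - y‖ ^ (a - s) := by
  have hJ := mul_pos (jap_pos x) (jap_pos y)
  have hr := norm_nonneg (x - y)
  calc (jap x * jap y) ^ (-s) * ‖x - y‖ ^ a
      = (‖x - y‖ / (jap x * jap y)) ^ s * ‖x - y‖ ^ (a - s) := by
        have hsplit : ‖x - y‖ ^ a = ‖x - y‖ ^ s * ‖x - y‖ ^ (a - s) := by
          rw [← rpow_add_of_nonneg hr hs (by linarith), add_sub_cancel]
        rw [div_rpow hr hJ.le, rpow_neg hJ.le, hsplit]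
        ring
    _ ≤ 2 ^ s * ‖x - y‖ ^ (a - s) := by
        gcongr
        rw [div_le_iff₀ hJ]
        exact norm_sub_le_two_mul_jap_mul_jap x y

theorem rpow_mul_exp_neg_sq_div_eight_le {u a : ℝ} (hu : 0 ≤ u) (ha : 0 ≤ a) (ha' : a ≤ 1) :
    u ^ a * exp (-u ^ 2 / 8) ≤ exp 2 := by
  have hua : u ^ a ≤ 1 + u := by
    rcases le_total u 1 with h | h
    · linarith [rpow_le_one hu h ha]
    · linarith [rpow_le_self_of_one_le h ha']
  calc u ^ a * exp (-u ^ 2 / 8) ≤ exp u * exp (-u ^ 2 / 8) := by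
        gcongr
        linarith [add_one_le_exp u]
    _ = exp (u - u ^ 2 / 8) := by rw [← exp_add]; ring_nf
    _ ≤ exp 2 := exp_le_exp.mpr (by nlinarith [sq_nonneg (u - 4)])

theorem rpow_mul_exp_neg_mul_sq_le {r t a : ℝ} (hr : 0 ≤ r) (ht : 0 < t) (ha : 0 ≤ a)
    (ha' : a ≤ 1) :
    r ^ a * exp (-(8 * t)⁻¹ * r ^ 2) ≤ exp 2 * t ^ (a / 2) := by
  have hst : 0 < √t := sqrt_pos.mpr ht
  have hu : 0 ≤ r / √t := div_nonneg hr hst.le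
  calc r ^ a * exp (-(8 * t)⁻¹ * r ^ 2)
      = t ^ (a / 2) * ((r / √t) ^ a * exp (-(r / √t) ^ 2 / 8)) := by
        have hta : t ^ (a / 2) = √t ^ a := by rw [sqrt_eq_rpow, ← rpow_mul ht.le]; ring_nf
        have hexp : -(r / √t) ^ 2 / 8 = -(8 * t)⁻¹ * r ^ 2 := by
          rw [div_pow, sq_sqrt ht.le]
          ring
        have hsta : 0 < √t ^ a := rpow_pos_of_pos hst a
        rw [hta, hexp, div_rpow hr hst.le]
        field_simp
    _ ≤ t ^ (a / 2) * exp 2 := by gcongr; exact rpow_mul_exp_neg_sq_div_eight_le hu ha ha'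
    _ = exp 2 * t ^ (a / 2) := mul_comm _ _

theorem heatKernel_eq_mul_exp_sq (d : ℕ) (t : ℝ) (z : Ed d) :
    heatKernel d t z = (4 * π * t) ^ (-(d : ℝ) / 2) * exp (-(8 * t)⁻¹ * ‖z‖ ^ 2) ^ 2 := by
  rw [heatKernel, ← exp_nat_mul]
  push_cast
  ring_nf

theorem abs_heatKernelDeriv_le {d : ℕ} (β : Fin d → ℕ) {t : ℝ} (ht : 0 < t) (z : Ed d) :
    |heatKernelDeriv d β t z| ≤ (‖z‖ / (2 * t)) ^ (∑ j, β j) * heatKernel d t z := by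
  have hK : 0 ≤ heatKernel d t z := by rw [heatKernel]; positivity
  rw [heatKernelDeriv, abs_mul, abs_of_nonneg hK, Finset.abs_prod, ← Finset.prod_pow_eq_pow_sum]
  gcongr with j
  rw [abs_pow, abs_div, abs_neg, abs_of_pos (by positivity : 0 < 2 * t)]
  gcongr
  exact PiLp.norm_apply_le z j

theorem abs_heatKernelDeriv_le_rpow_mul_exp_sq {d : ℕ} (β : Fin d → ℕ) {t : ℝ} (ht : 0 < t)
    (z : Ed d) :
    |heatKernelDeriv d β t z| ≤ ‖z‖ ^ ((∑ j, β j : ℕ) : ℝ) * t ^ (-((∑ j, β j : ℕ) : ℝ)) *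
      ((4 * π) ^ (-(d : ℝ) / 2) * t ^ (-(d : ℝ) / 2) * exp (-(8 * t)⁻¹ * ‖z‖ ^ 2) ^ 2) := by
  refine (abs_heatKernelDeriv_le β ht z).trans ?_
  rw [heatKernel_eq_mul_exp_sq, mul_rpow (by positivity) ht.le, rpow_natCast, rpow_neg ht.le,
    rpow_natCast, div_pow, div_eq_mul_inv]
  gcongr
  linarith

theorem abs_jap_rpow_neg_mul_heatKernelDeriv_mul_le {d : ℕ} {β : Fin d → ℕ} (hβ : ∑ j, β j ≤ 1)
    {s t : ℝ} (hs : 0 ≤ s) (hsβ : s ≤ ((∑ j, β j : ℕ) : ℝ)) (ht : 0 < t) (x y : Ed d) :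
    |jap x ^ (-s) * heatKernelDeriv d β t (x - y) * jap y ^ (-s)| ≤
      2 ^ s * exp 2 * (4 * π) ^ (-(d : ℝ) / 2) *
        t ^ (-(d : ℝ) / 2 - ((∑ j, β j : ℕ) : ℝ) / 2 - s / 2) * exp (-(8 * t)⁻¹ * ‖x - y‖ ^ 2) := by
  set b : ℕ := ∑ j, β j
  set r := ‖x - y‖
  set E := exp (-(8 * t)⁻¹ * r ^ 2)
  set T := t ^ (-(b : ℝ)) * (4 * π) ^ (-(d : ℝ) / 2) * t ^ (-(d : ℝ) / 2) * E
  have hb : (b : ℝ) ≤ 1 := by exact_mod_cast hβ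
  have hJ : 0 ≤ (jap x * jap y) ^ (-s) := (rpow_pos_of_pos (mul_pos (jap_pos x) (jap_pos y)) _).le
  have hderiv := abs_heatKernelDeriv_le_rpow_mul_exp_sq β ht (x - y)
  have hweight := jap_mul_jap_rpow_neg_mul_norm_sub_rpow_le x y hs hsβ
  have hgauss : r ^ ((b : ℝ) - s) * E ≤ exp 2 * t ^ (((b : ℝ) - s) / 2) :=
    rpow_mul_exp_neg_mul_sq_le (norm_nonneg _) ht (by linarith) (by linarith)
  have htexp : t ^ (-(d : ℝ) / 2 - (b : ℝ) / 2 - s / 2) =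
      t ^ (-(b : ℝ)) * t ^ (-(d : ℝ) / 2) * t ^ (((b : ℝ) - s) / 2) := by
    rw [← rpow_add ht, ← rpow_add ht]
    ring_nf
  calc |jap x ^ (-s) * heatKernelDeriv d β t (x - y) * jap y ^ (-s)|
      = (jap x * jap y) ^ (-s) * |heatKernelDeriv d β t (x - y)| := by
        rw [abs_mul, abs_mul, abs_of_pos (rpow_pos_of_pos (jap_pos x) _),
          abs_of_pos (rpow_pos_of_pos (jap_pos y) _), mul_rpow (jap_pos x).le (jap_pos y).le]
        ring
    _ ≤ (jap x * jap y) ^ (-s) * (r ^ (b : ℝ) * t ^ (-(b : ℝ)) *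
          ((4 * π) ^ (-(d : ℝ) / 2) * t ^ (-(d : ℝ) / 2) * E ^ 2)) := by gcongr
    _ = ((jap x * jap y) ^ (-s) * r ^ (b : ℝ)) * E * T := by ring
    _ ≤ 2 ^ s * (r ^ ((b : ℝ) - s) * E) * T := by rw [← mul_assoc (2 ^ s)]; gcongr
    _ ≤ 2 ^ s * (exp 2 * t ^ (((b : ℝ) - s) / 2)) * T := by gcongr
    _ = _ := by rw [htexp]; ring

theorem heat_semigroup_weighted_L1_L2_bound_general
    (d : ℕ) (β : Fin d → ℕ) (hβ : ∑ j, β j ≤ 1)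
    (s : ℝ) (hs : s ∈ Set.Icc (0 : ℝ) ((∑ j, β j : ℕ) : ℝ)) :
    ∃ C : ℝ, 0 ≤ C ∧
      ∀ t : ℝ, 0 < t →
        ∀ φ : Ed d → ℂ, MemLp φ 1 volume →
          eLpNorm (fun x => jap x ^ (-s) • ∫ y, (heatKernelDeriv d β t (x - y) * jap y ^ (-s)) • φ y)
              2 volume ≤
            ENNReal.ofReal
                (C * t ^ (-(d : ℝ) / 4 - ((∑ j, β j : ℕ) : ℝ) / 2 - s / 2)) *
              eLpNorm φ 1 volume := by
  set b : ℕ := ∑ j, β j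
  refine ⟨2 ^ s * exp 2 * (4 * π) ^ (-(d : ℝ) / 2) * (4 * π) ^ ((d : ℝ) / 4), by positivity,
    fun t ht φ hφ => ?_⟩
  set A := 2 ^ s * exp 2 * (4 * π) ^ (-(d : ℝ) / 2) * t ^ (-(d : ℝ) / 2 - (b : ℝ) / 2 - s / 2)
  have hA : 0 ≤ A := by positivity
  have hweighted :
      (fun x => jap x ^ (-s) • ∫ y, (heatKernelDeriv d β t (x - y) * jap y ^ (-s)) • φ y) =
        fun x => ∫ y, (jap x ^ (-s) * heatKernelDeriv d β t (x - y) * jap y ^ (-s)) • φ y := by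
    ext x
    rw [← integral_smul]
    simp_rw [smul_smul, mul_assoc]
  have hgauss := eLpNorm_two_exp_neg_mul_sq_norm (V := Ed d) (b := (8 * t)⁻¹) (by positivity)
  have hsmul := eLpNorm_const_smul A (fun z : Ed d => exp (-(8 * t)⁻¹ * ‖z‖ ^ 2)) 2 volume
  simp only [Pi.smul_def, smul_eq_mul] at hsmul
  rw [hweighted]
  refine (eLpNorm_two_integral_kernel_smul_le (g := fun z => A * exp (-(8 * t)⁻¹ * ‖z‖ ^ 2))
    (by fun_prop) (abs_jap_rpow_neg_mul_heatKernelDeriv_mul_le hβ hs.1 hs.2 ht) hφ.1).trans_eq ?_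
  rw [hsmul, hgauss, Real.enorm_eq_ofReal hA, ← ENNReal.ofReal_mul hA, finrank_euclideanSpace_fin]
  congr 2
  have hπt : π / (2 * (8 * t)⁻¹) = 4 * π * t := by field_simp; ring
  have htexp : t ^ (-(d : ℝ) / 4 - (b : ℝ) / 2 - s / 2) =
      t ^ (-(d : ℝ) / 2 - (b : ℝ) / 2 - s / 2) * t ^ ((d : ℝ) / 4) := by
    rw [← rpow_add ht]
    ring_nf
  rw [hπt, mul_rpow (by positivity) ht.le, htexp]
  ring

/-- **Weighted `L¹ → L²` kernel estimate for the heat semigroup on `ℝ^d`.** -/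
theorem heat_semigroup_weighted_L1_L2_bound
    (d : ℕ) (hd : 1 ≤ d) (β : Fin d → ℕ) (hβ : ∑ j, β j ≤ 1)
    (s : ℝ) (hs : s ∈ Set.Icc (0 : ℝ) ((∑ j, β j : ℕ) : ℝ)) :
    ∃ C : ℝ, 0 ≤ C ∧
      ∀ t : ℝ, 0 < t →
        ∀ φ : Ed d → ℂ, MemLp φ 1 volume →
          eLpNorm (fun x => jap x ^ (-s) • ∫ y, (heatKernelDeriv d β t (x - y) * jap y ^ (-s)) • φ y)
              2 volume ≤
            ENNReal.ofReal
                (C * t ^ (-(d : ℝ) / 4 - ((∑ j, β j : ℕ) : ℝ) / 2 - s / 2)) *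
              eLpNorm φ 1 volume :=
  heat_semigroup_weighted_L1_L2_bound_general d β hβ s hs

end
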